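/- arXiv:2112.05476 — 11 statements merged into one kernel-verified Lean document; each statement's English description precedes it below -/
import Mathlib

section
/- Let G be a finite simple claw-free graph with minimum degree at least 3. If S is a vertex cover of G (a set of vertices meeting every edge of G), then S is also a total dominating set of G (every vertex of G has a neighbor in S). -/
namespace OITRPaper

variable {V : Type*}

/-- `S` is a vertex cover of `G`: every edge of `G` is incident to a vertex of `S`. -/
def IsVertexCover (G : SimpleGraph V) (S : Set V) : Prop :=
  ∀ ⦃u v : V⦄, G.Adj u v → u ∈ S ∨ v ∈ S

/-- `S` is an independent set of `G`: no two vertices of `S` are adjacent. -/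
def IsIndepSet (G : SimpleGraph V) (S : Set V) : Prop :=
  ∀ ⦃u : V⦄, u ∈ S → ∀ ⦃v : V⦄, v ∈ S → ¬ G.Adj u v

/-- `S` is a dominating set of `G`. -/
def IsDomSet (G : SimpleGraph V) (S : Set V) : Prop :=
  ∀ v : V, v ∉ S → ∃ u ∈ S, G.Adj v u

/-- `S` is a total dominating set of `G`: every vertex has a neighbor in `S`. -/
def IsTotalDomSet (G : SimpleGraph V) (S : Set V) : Prop :=
  ∀ v : V, ∃ u ∈ S, G.Adj v u

/-- `G` is claw-free: it contains no induced `K_{1,3}`. -/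
def ClawFree (G : SimpleGraph V) : Prop :=
  ∀ c a b d : V, G.Adj c a → G.Adj c b → G.Adj c d →
    a ≠ b → a ≠ d → b ≠ d → G.Adj a b ∨ G.Adj a d ∨ G.Adj b d

/-- `f` is a Roman dominating function on `G`. -/
def IsRDF (G : SimpleGraph V) (f : V → ℕ) : Prop :=
  (∀ v, f v ≤ 2) ∧ ∀ v, f v = 0 → ∃ u, G.Adj v u ∧ f u = 2

/-- `f` is an outer-independent Roman dominating function on `G`. -/
def IsOIRDF (G : SimpleGraph V) (f : V → ℕ) : Prop :=
  IsRDF G f ∧ IsIndepSet G {v | f v = 0}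

/-- `f` is an outer-independent total Roman dominating function on `G`. -/
def IsOITRDF (G : SimpleGraph V) (f : V → ℕ) : Prop :=
  IsOIRDF G f ∧ ∀ v, 1 ≤ f v → ∃ u, G.Adj v u ∧ 1 ≤ f u

variable [Fintype V]

/-- The vertex cover number `α(G)`. -/
noncomputable def vertexCoverNum (G : SimpleGraph V) : ℕ :=
  sInf {m | ∃ S : Set V, IsVertexCover G S ∧ S.ncard = m}

/-- The independence number `β(G)`. -/
noncomputable def indepNum (G : SimpleGraph V) : ℕ :=
  sSup {m | ∃ S : Set V, IsIndepSet G S ∧ S.ncard = m}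

/-- The domination number `γ(G)`. -/
noncomputable def domNum (G : SimpleGraph V) : ℕ :=
  sInf {m | ∃ S : Set V, IsDomSet G S ∧ S.ncard = m}

/-- The total domination number `γ_t(G)`. -/
noncomputable def totalDomNum (G : SimpleGraph V) : ℕ :=
  sInf {m | ∃ S : Set V, IsTotalDomSet G S ∧ S.ncard = m}

/-- The outer-independent total domination number `γ_{t,oi}(G)`. -/
noncomputable def oiTotalDomNum (G : SimpleGraph V) : ℕ :=
  sInf {m | ∃ S : Set V, IsTotalDomSet G S ∧ IsIndepSet G Sᶜ ∧ S.ncard = m}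

/-- The Roman domination number `γ_R(G)`. -/
noncomputable def romanDomNum (G : SimpleGraph V) : ℕ :=
  sInf {w | ∃ f : V → ℕ, IsRDF G f ∧ ∑ v, f v = w}

/-- The outer-independent Roman domination number `γ_{oiR}(G)`. -/
noncomputable def oiRomanDomNum (G : SimpleGraph V) : ℕ :=
  sInf {w | ∃ f : V → ℕ, IsOIRDF G f ∧ ∑ v, f v = w}

/-- The outer-independent total Roman domination number `γ_{oitR}(G)`. -/
noncomputable def oitRomanDomNum (G : SimpleGraph V) : ℕ :=
  sInf {w | ∃ f : V → ℕ, IsOITRDF G f ∧ ∑ v, f v = w}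


/-- In a claw-free graph of minimum degree at least 3, every vertex cover is a
total dominating set. -/
theorem stmt0 {V : Type*} [Fintype V] (G : SimpleGraph V) [DecidableRel G.Adj]
    (hclaw : ClawFree G) (hdeg : ∀ v : V, 3 ≤ G.degree v)
    (S : Set V) (hS : IsVertexCover G S) :
    IsTotalDomSet G S := by
  intro v
  by_contra h
  push_neg at h
  -- every neighbor of v is not in S
  have hnb : ∀ u : V, G.Adj v u → u ∉ S := by
    intro u hu hus
    exact h u hus hu
  -- get three distinct neighbors
  classical
  have hcard : 3 ≤ (G.neighborFinset v).card := hdeg v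
  obtain ⟨a, ha⟩ := Finset.card_pos.mp (by omega : 0 < (G.neighborFinset v).card)
  have h2 : 0 < ((G.neighborFinset v).erase a).card := by
    have := Finset.card_erase_of_mem ha; omega
  obtain ⟨b, hb⟩ := Finset.card_pos.mp h2
  have h3 : 0 < (((G.neighborFinset v).erase a).erase b).card := by
    have h1 := Finset.card_erase_of_mem ha
    have h2' := Finset.card_erase_of_mem hb
    omega
  obtain ⟨c, hc⟩ := Finset.card_pos.mp h3
  have hba : b ≠ a := (Finset.mem_erase.mp hb).1
  have hcb : c ≠ b := (Finset.mem_erase.mp hc).1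
  have hca : c ≠ a := (Finset.mem_erase.mp ((Finset.mem_erase.mp hc).2)).1
  have hva : G.Adj v a := (SimpleGraph.mem_neighborFinset _ _ _).mp ha
  have hvb : G.Adj v b := (SimpleGraph.mem_neighborFinset _ _ _).mp
    (Finset.mem_of_mem_erase hb)
  have hvc : G.Adj v c := (SimpleGraph.mem_neighborFinset _ _ _).mp
    (Finset.mem_of_mem_erase (Finset.mem_of_mem_erase hc))
  have hne : ∀ {x y : V}, G.Adj x y → x ∉ S → y ∉ S → False := by
    intro x y hxy hx hy
    rcases hS hxy with h1 | h1 <;> [exact hx h1; exact hy h1]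
  rcases hclaw v a b c hva hvb hvc hba.symm hca.symm hcb.symm with hab | had | hbd
  · exact hne hab (hnb a hva) (hnb b hvb)
  · exact hne had (hnb a hva) (hnb c hvc)
  · exact hne hbd (hnb b hvb) (hnb c hvc)

end OITRPaper
end

section
/- Let G be a finite simple graph with no isolated vertex and maximum degree Δ ≥ 2. Then γ_oitR(G) ≤ α(G) + γ_t(G). -/
namespace OITRPaper

variable {V : Type*}

variable [Fintype V]

/-- Upper bound: `γ_oitR(G) ≤ α(G) + γ_t(G)` for a graph with no isolated vertex and
maximum degree `Δ ≥ 2`. -/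
theorem stmt2 {V : Type*} [Fintype V] (G : SimpleGraph V) [DecidableRel G.Adj]
    (hiso : ∀ v : V, ∃ u, G.Adj v u) (hΔ : 2 ≤ G.maxDegree) :
    oitRomanDomNum G ≤ vertexCoverNum G + totalDomNum G := by
  classical
  -- obtain a minimum vertex cover
  have hScov : vertexCoverNum G ∈ {m | ∃ S : Set V, IsVertexCover G S ∧ S.ncard = m} := by
    apply Nat.sInf_mem
    exact ⟨(Set.univ : Set V).ncard, Set.univ, fun u v _ => Or.inl trivial, rfl⟩
  have hDdom : totalDomNum G ∈ {m | ∃ S : Set V, IsTotalDomSet G S ∧ S.ncard = m} := by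
    apply Nat.sInf_mem
    refine ⟨(Set.univ : Set V).ncard, Set.univ, ?_, rfl⟩
    intro v
    obtain ⟨u, hu⟩ := hiso v
    exact ⟨u, trivial, hu⟩
  obtain ⟨S, hS, hScard⟩ := hScov
  obtain ⟨D, hD, hDcard⟩ := hDdom
  set f : V → ℕ := fun v => (if v ∈ S then 1 else 0) + (if v ∈ D then 1 else 0) with hf
  have key : ∀ T : Set V, (∑ x : V, if x ∈ T then 1 else 0) = T.ncard := by
    intro T
    rw [Set.ncard_eq_toFinset_card', ← Set.filter_mem_univ_eq_toFinset, Finset.card_filter]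
  have hsum : ∑ v, f v = S.ncard + D.ncard := by
    rw [Finset.sum_add_distrib, key S, key D]
  have hmem : IsOITRDF G f := by
    refine ⟨⟨⟨fun v => ?_, fun v hv => ?_⟩, ?_⟩, fun v hv => ?_⟩
    · by_cases h1 : v ∈ S <;> by_cases h2 : v ∈ D <;> simp [hf, h1, h2]
    · have hvS : v ∉ S := by
        intro h; simp [hf, h] at hv
      have hvD : v ∉ D := by
        intro h; simp [hf, h] at hv
      obtain ⟨u, huD, hadj⟩ := hD v
      have huS : u ∈ S := (hS hadj).resolve_left hvS
      exact ⟨u, hadj, by simp [hf, huS, huD]⟩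
    · intro u hu v hv hadj
      have huS : u ∉ S := by
        intro h; simp [hf, h] at hu
      have hvS : v ∉ S := by
        intro h; simp [hf, h] at hv
      rcases hS hadj with h | h
      · exact huS h
      · exact hvS h
    · obtain ⟨u, huD, hadj⟩ := hD v
      exact ⟨u, hadj, by simp [hf, huD]⟩
  calc oitRomanDomNum G ≤ ∑ v, f v := Nat.sInf_le ⟨f, hmem, rfl⟩
    _ = vertexCoverNum G + totalDomNum G := by rw [hsum, hScard, hDcard]

end OITRPaper
end

section
/- Let G be a finite simple claw-free graph with minimum degree at least 3. Then γ_oitR(G) ≤ α(G) + γ(G). -/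
namespace OITRPaper

variable {V : Type*}

variable [Fintype V]

/-- For a claw-free graph of minimum degree at least 3, `γ_oitR(G) ≤ α(G) + γ(G)`. -/
theorem stmt3 {V : Type*} [Fintype V] (G : SimpleGraph V) [DecidableRel G.Adj]
    (hclaw : ClawFree G) (hdeg : ∀ v : V, 3 ≤ G.degree v) :
    oitRomanDomNum G ≤ vertexCoverNum G + domNum G := by
  classical
  have hVCne : {m | ∃ S : Set V, IsVertexCover G S ∧ S.ncard = m}.Nonempty :=
    ⟨(Set.univ : Set V).ncard, Set.univ, fun u v _ => Or.inl (Set.mem_univ u), rfl⟩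
  have hDne : {m | ∃ S : Set V, IsDomSet G S ∧ S.ncard = m}.Nonempty :=
    ⟨(Set.univ : Set V).ncard, Set.univ, fun v hv => absurd (Set.mem_univ v) hv, rfl⟩
  obtain ⟨S, hS, hSc⟩ := Nat.sInf_mem hVCne
  obtain ⟨D, hDdom, hDc⟩ := Nat.sInf_mem hDne
  set f : V → ℕ := fun v => (if v ∈ S then 1 else 0) + (if v ∈ D then 1 else 0) with hf
  have hf0 : ∀ v, f v = 0 ↔ v ∉ S ∧ v ∉ D := by
    intro v
    simp only [hf]
    split_ifs <;> simp_all
  have hnbrS : ∀ v, v ∉ S → ∀ u, G.Adj v u → u ∈ S := by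
    intro v hv u hadj
    rcases hS hadj with h | h
    · exact absurd h hv
    · exact h
  have hle : oitRomanDomNum G ≤ ∑ v, f v := by
    apply Nat.sInf_le
    refine ⟨f, ⟨⟨⟨?_, ?_⟩, ?_⟩, ?_⟩, rfl⟩
    · intro v; simp only [hf]; split_ifs <;> omega
    · intro v hv
      rw [hf0] at hv
      obtain ⟨u, hu, hadj⟩ := hDdom v hv.2
      refine ⟨u, hadj, ?_⟩
      have huS := hnbrS v hv.1 u hadj
      simp [hf, huS, hu]
    · intro a ha b hb hadj
      rw [Set.mem_setOf_eq, hf0] at ha hb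
      rcases hS hadj with h | h
      · exact ha.1 h
      · exact hb.1 h
    · intro v hv
      by_cases hvS : v ∈ S
      · by_contra hc
        push_neg at hc
        have hall : ∀ u, G.Adj v u → u ∉ S ∧ u ∉ D := by
          intro u hadj
          have h1 := hc u hadj
          rw [← hf0]
          omega
        have hcard : 2 < (G.neighborFinset v).card := by
          have := hdeg v
          rw [← SimpleGraph.card_neighborFinset_eq_degree] at this
          omega
        obtain ⟨a, b, c, ha, hb, hc3, hab, hac, hbc⟩ := Finset.two_lt_card_iff.mp hcard
        rw [SimpleGraph.mem_neighborFinset] at ha hb hc3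
        rcases hclaw v a b c ha hb hc3 hab hac hbc with h | h | h
        · rcases hS h with hx | hx
          · exact (hall a ha).1 hx
          · exact (hall b hb).1 hx
        · rcases hS h with hx | hx
          · exact (hall a ha).1 hx
          · exact (hall c hc3).1 hx
        · rcases hS h with hx | hx
          · exact (hall b hb).1 hx
          · exact (hall c hc3).1 hx
      · have hdpos : 0 < (G.neighborFinset v).card := by
          have := hdeg v
          rw [← SimpleGraph.card_neighborFinset_eq_degree] at this
          omega
        obtain ⟨u, hu⟩ := Finset.card_pos.mp hdpos
        rw [SimpleGraph.mem_neighborFinset] at hu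
        have huS := hnbrS v hvS u hu
        exact ⟨u, hu, by simp [hf, huS]⟩
  have hsum : ∑ v, f v = S.ncard + D.ncard := by
    simp only [hf, Finset.sum_add_distrib, Finset.sum_boole, Nat.cast_id]
    rw [Set.ncard_eq_toFinset_card', Set.ncard_eq_toFinset_card']
    congr 1 <;> (congr 1; ext x; simp)
  rw [hsum, hSc, hDc] at hle
  exact hle

end OITRPaper
end

section
/- Let G be a finite simple graph with no isolated vertex. Then γ_oitR(G) ≤ α(G) + γ_R(G) ≤ α(G) + 2γ(G). -/
namespace OITRPaper

variable {V : Type*}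

variable [Fintype V]

/-- For any graph with no isolated vertex,
`γ_oitR(G) ≤ α(G) + γ_R(G) ≤ α(G) + 2γ(G)`. -/
theorem stmt4 {V : Type*} [Fintype V] (G : SimpleGraph V)
    (hiso : ∀ v : V, ∃ u, G.Adj v u) :
    oitRomanDomNum G ≤ vertexCoverNum G + romanDomNum G ∧
      vertexCoverNum G + romanDomNum G ≤ vertexCoverNum G + 2 * domNum G := by
  classical
  have key : ∀ T : Set V, ∑ v, (if v ∈ T then (1:ℕ) else 0) = T.ncard := by
    intro T
    rw [Set.ncard_eq_toFinset_card']
    rw [show T.toFinset = Finset.univ.filter (· ∈ T) from by ext v; simp, Finset.card_filter]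
  -- minimum vertex cover
  have hVCne : {m | ∃ S : Set V, IsVertexCover G S ∧ S.ncard = m}.Nonempty :=
    ⟨(Set.univ : Set V).ncard, Set.univ, fun u v _ => Or.inl (Set.mem_univ u), rfl⟩
  obtain ⟨S, hS, hScard⟩ : ∃ S : Set V, IsVertexCover G S ∧ S.ncard = vertexCoverNum G :=
    Nat.sInf_mem hVCne
  -- minimum RDF
  have hRne : {w | ∃ f : V → ℕ, IsRDF G f ∧ ∑ v, f v = w}.Nonempty :=
    ⟨_, fun _ => 2, ⟨fun _ => le_refl 2, fun v hv => by simp at hv⟩, rfl⟩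
  obtain ⟨f, hf, hfsum⟩ : ∃ f : V → ℕ, IsRDF G f ∧ ∑ v, f v = romanDomNum G :=
    Nat.sInf_mem hRne
  obtain ⟨hf2, hf0⟩ := hf
  constructor
  · -- first inequality
    set gg : V → ℕ := fun v => max (f v) (if v ∈ S then 1 else 0) with hgg_def
    set bad : Set V := {v | 1 ≤ gg v ∧ ∀ u, G.Adj v u → gg u = 0} with hbad_def
    choose pick hpick using hiso
    set U : Set V := pick '' bad with hU_def
    set FF : V → ℕ := fun v => max (gg v) (if v ∈ U then 1 else 0) with hFF_def
    have hgg0 : ∀ v, gg v = 0 → f v = 0 ∧ v ∉ S := by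
      intro v hv
      simp only [hgg_def, Nat.max_eq_zero_iff] at hv
      refine ⟨hv.1, fun hvS => by simp [hvS] at hv⟩
    have hFF0 : ∀ v, FF v = 0 → gg v = 0 := by
      intro v hv
      simp only [hFF_def, Nat.max_eq_zero_iff] at hv
      exact hv.1
    have hbadSf : ∀ v ∈ bad, v ∈ S ∧ 1 ≤ f v := by
      intro v hv
      obtain ⟨hv1, hv0⟩ := hv
      have hfv : 1 ≤ f v := by
        by_contra hc
        have hfv0 : f v = 0 := by omega
        obtain ⟨u, hadj, hu2⟩ := hf0 v hfv0
        have hgu := hv0 u hadj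
        simp only [hgg_def] at hgu
        omega
      have hvS : v ∈ S := by
        have hadj := hpick v
        have hgp := hv0 _ hadj
        have hns := (hgg0 _ hgp).2
        rcases hS hadj with h1 | h1
        · exact h1
        · exact absurd h1 hns
      exact ⟨hvS, hfv⟩
    -- FF is an OITRDF
    have hOIT : IsOITRDF G FF := by
      refine ⟨⟨⟨?_, ?_⟩, ?_⟩, ?_⟩
      · intro v
        have := hf2 v
        simp only [hFF_def, hgg_def]
        split <;> split <;> omega
      · intro v hv
        have hgv := hFF0 v hv
        obtain ⟨hfv, _⟩ := hgg0 v hgv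
        obtain ⟨u, hadj, hu2⟩ := hf0 v hfv
        refine ⟨u, hadj, ?_⟩
        have hfu2 := hf2 u
        simp only [hFF_def, hgg_def]
        split <;> split <;> omega
      · intro u hu v hv hadj
        have hus := (hgg0 u (hFF0 u hu)).2
        have hvs := (hgg0 v (hFF0 v hv)).2
        rcases hS hadj with h1 | h1
        · exact hus h1
        · exact hvs h1
      · intro v hv
        by_cases hgv : 1 ≤ gg v
        · by_cases hb : v ∈ bad
          · refine ⟨pick v, hpick v, ?_⟩
            have hmem : pick v ∈ U := ⟨v, hb, rfl⟩
            simp only [hFF_def, if_pos hmem]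
            omega
          · simp only [hbad_def, Set.mem_setOf_eq, not_and] at hb
            push_neg at hb
            obtain ⟨u, hadj, hu⟩ := hb hgv
            refine ⟨u, hadj, ?_⟩
            simp only [hFF_def]
            omega
        · have hgv0 : gg v = 0 := by omega
          have hvU : v ∈ U := by
            by_contra hc
            simp only [hFF_def, hgv0, if_neg hc] at hv
            omega
          obtain ⟨w, hw, hwv⟩ := hvU
          refine ⟨w, ?_, ?_⟩
          · exact (hwv ▸ hpick w).symm
          · have hw1 := hw.1
            simp only [hFF_def]
            omega
    -- weight bound
    have hw : ∑ v, FF v ≤ S.ncard + ∑ v, f v := by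
      have step1 : ∑ v, FF v ≤ (∑ v, gg v) + U.ncard := by
        rw [← key U, ← Finset.sum_add_distrib]
        apply Finset.sum_le_sum
        intro v _
        simp only [hFF_def]
        omega
      have himg : U.ncard ≤ bad.ncard := hU_def ▸ Set.ncard_image_le bad.toFinite
      have step3 : (∑ v, gg v) + bad.ncard ≤ (∑ v, f v) + S.ncard := by
        rw [← key bad, ← key S, ← Finset.sum_add_distrib, ← Finset.sum_add_distrib]
        apply Finset.sum_le_sum
        intro v _
        by_cases hb : v ∈ bad
        · obtain ⟨hvS, hfv⟩ := hbadSf v hb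
          simp only [hgg_def, if_pos hb, if_pos hvS]
          omega
        · simp only [hgg_def, if_neg hb]
          split <;> omega
      omega
    have hle : oitRomanDomNum G ≤ ∑ v, FF v := Nat.sInf_le ⟨FF, hOIT, rfl⟩
    calc oitRomanDomNum G ≤ ∑ v, FF v := hle
      _ ≤ S.ncard + ∑ v, f v := hw
      _ = vertexCoverNum G + romanDomNum G := by rw [hScard, hfsum]
  · -- second inequality
    apply Nat.add_le_add_left
    have hDne : {m | ∃ S : Set V, IsDomSet G S ∧ S.ncard = m}.Nonempty :=
      ⟨(Set.univ : Set V).ncard, Set.univ, fun v hv => absurd (Set.mem_univ v) hv, rfl⟩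
    obtain ⟨D, hD, hDcard⟩ : ∃ S : Set V, IsDomSet G S ∧ S.ncard = domNum G :=
      Nat.sInf_mem hDne
    set f2 : V → ℕ := fun v => if v ∈ D then 2 else 0 with hf2_def
    have hRDF : IsRDF G f2 := by
      constructor
      · intro v; simp only [hf2_def]; split <;> omega
      · intro v hv
        have hvD : v ∉ D := by
          intro hc; simp only [hf2_def, if_pos hc] at hv; omega
        obtain ⟨u, huD, hadj⟩ := hD v hvD
        exact ⟨u, hadj, by simp [hf2_def, huD]⟩
    have hsum : ∑ v, f2 v = 2 * D.ncard := by
      rw [← key D, Finset.mul_sum]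
      apply Finset.sum_congr rfl
      intro v _
      simp only [hf2_def]
      split <;> omega
    calc romanDomNum G ≤ ∑ v, f2 v := Nat.sInf_le ⟨f2, hRDF, rfl⟩
      _ = 2 * D.ncard := hsum
      _ = 2 * domNum G := by rw [hDcard]

end OITRPaper
end

section
/- Let G be a finite simple graph with no isolated vertex. If γ_oitR(G) = α(G) + 2γ(G), then G is a Roman graph, i.e., γ_R(G) = 2γ(G). -/
namespace OITRPaper

variable {V : Type*}

variable [Fintype V]

/-- γ_R ≤ 2γ -/
theorem roman_le {V : Type*} [Fintype V] (G : SimpleGraph V) :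
    romanDomNum G ≤ 2 * domNum G := by
  classical
  have hDnem : {m | ∃ S : Set V, IsDomSet G S ∧ S.ncard = m}.Nonempty :=
    ⟨(Set.univ : Set V).ncard, Set.univ, fun v hv => absurd (Set.mem_univ v) hv, rfl⟩
  obtain ⟨D, hD, hDcard⟩ : ∃ S : Set V, IsDomSet G S ∧ S.ncard = domNum G :=
    Nat.sInf_mem hDnem
  clear hDnem
  set f : V → ℕ := fun v => if v ∈ D then 2 else 0 with hfdef
  have hRDF : IsRDF G f := by
    constructor
    · intro v; simp only [hfdef]; split <;> omega
    · intro v hv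
      have hvD : v ∉ D := by
        intro hmem
        simp only [hfdef, if_pos hmem] at hv
        exact absurd hv (by decide)
      obtain ⟨u, hu, hadj⟩ := hD v hvD
      exact ⟨u, hadj, by simp only [hfdef, if_pos hu]⟩
  have hsum : ∑ v, f v = 2 * D.ncard := by
    rw [Set.ncard_eq_toFinset_card']
    rw [Finset.sum_congr rfl (fun v _ => by
      simp only [hfdef, ← Set.mem_toFinset (s := D)] :
      ∀ v ∈ Finset.univ, f v = (if v ∈ D.toFinset then 2 else 0))]
    rw [Finset.sum_ite_mem, Finset.univ_inter, Finset.sum_const, smul_eq_mul]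
    ring
  calc romanDomNum G ≤ ∑ v, f v := Nat.sInf_le ⟨f, hRDF, rfl⟩
    _ = 2 * D.ncard := hsum
    _ = 2 * domNum G := by rw [hDcard]

/-- γ_oitR ≤ α + γ_R for graphs with no isolated vertex -/
theorem oit_le {V : Type*} [Fintype V] (G : SimpleGraph V)
    (hiso : ∀ v : V, ∃ u, G.Adj v u) :
    oitRomanDomNum G ≤ vertexCoverNum G + romanDomNum G := by
  classical
  have hSnem : {m | ∃ S : Set V, IsVertexCover G S ∧ S.ncard = m}.Nonempty :=
    ⟨(Set.univ : Set V).ncard, Set.univ, fun u v _ => Or.inl trivial, rfl⟩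
  obtain ⟨S, hS, hScard⟩ : ∃ S : Set V, IsVertexCover G S ∧ S.ncard = vertexCoverNum G :=
    Nat.sInf_mem hSnem
  clear hSnem
  have hfnem : {w | ∃ f : V → ℕ, IsRDF G f ∧ ∑ v, f v = w}.Nonempty :=
    ⟨∑ _v : V, 2, fun _ => 2, ⟨fun _ => le_refl 2, fun v hv => by simp at hv⟩, rfl⟩
  obtain ⟨f, hf, hfsum⟩ : ∃ f : V → ℕ, IsRDF G f ∧ ∑ v, f v = romanDomNum G :=
    Nat.sInf_mem hfnem
  clear hfnem
  choose n hn using hiso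
  set Sf : Finset V := S.toFinset with hSf
  set V1 : Finset V := Finset.univ.filter (fun v => f v = 1) with hV1
  set V2 : Finset V := Finset.univ.filter (fun v => f v = 2) with hV2
  set Pf : Finset V := Sf ∪ V1 ∪ V2 with hPf
  set Bad : Finset V := Pf.filter (fun v => ∀ u ∈ Pf, ¬ G.Adj v u) with hBad
  set Nf : Finset V := Bad.image n with hNf
  set T : Finset V := Pf ∪ Nf with hT
  set g : V → ℕ := fun v => if f v = 2 then 2 else if v ∈ T then 1 else 0 with hg
  -- value lemmas for g
  have hgval2 : ∀ v, f v = 2 → g v = 2 := by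
    intro v h2; simp only [hg]; rw [if_pos h2]
  have hgval1 : ∀ v, f v ≠ 2 → v ∈ T → g v = 1 := by
    intro v h2 hvT; simp only [hg]; rw [if_neg h2, if_pos hvT]
  have hgval0 : ∀ v, f v ≠ 2 → v ∉ T → g v = 0 := by
    intro v h2 hvT; simp only [hg]; rw [if_neg h2, if_neg hvT]
  have hgle : ∀ v, g v ≤ 2 := by
    intro v
    by_cases h2 : f v = 2
    · rw [hgval2 v h2]
    · by_cases hvT : v ∈ T
      · rw [hgval1 v h2 hvT]; omega
      · rw [hgval0 v h2 hvT]; omega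
  have hgpos : ∀ u, u ∈ T → 1 ≤ g u := by
    intro u hu
    by_cases h2 : f u = 2
    · rw [hgval2 u h2]; omega
    · rw [hgval1 u h2 hu]
  -- membership helpers
  have hSfT : ∀ v, v ∈ S → v ∈ T := fun v hv =>
    Finset.mem_union_left _ (Finset.mem_union_left _ (Finset.mem_union_left _
      (by rw [hSf, Set.mem_toFinset]; exact hv)))
  have hV1T : ∀ v, f v = 1 → v ∈ T := fun v hv =>
    Finset.mem_union_left _ (Finset.mem_union_left _ (Finset.mem_union_right _
      (by simp [hV1, hv])))
  have hV2T : ∀ v, f v = 2 → v ∈ T := fun v hv =>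
    Finset.mem_union_left _ (Finset.mem_union_right _ (by simp [hV2, hv]))
  -- zeros of g have f = 0
  have hzero : ∀ v, g v = 0 → f v = 0 ∧ v ∉ T := by
    intro v hv
    have hvT : v ∉ T := by
      intro hm; have := hgpos v hm; omega
    have h2 : f v ≠ 2 := fun hh => hvT (hV2T v hh)
    have h1 : f v ≠ 1 := fun hh => hvT (hV1T v hh)
    have := hf.1 v
    exact ⟨by omega, hvT⟩
  -- Bad vertices lie in Sf ∩ (V1 ∪ V2)
  have hBadsub : Bad ⊆ Sf ∩ (V1 ∪ V2) := by
    intro v hv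
    rw [hBad, Finset.mem_filter] at hv
    obtain ⟨hvP, hvno⟩ := hv
    have hfv : f v ≠ 0 := by
      intro h0
      obtain ⟨u, hadj, hu2⟩ := hf.2 v h0
      exact hvno u (Finset.mem_union_right _ (by simp [hV2, hu2])) hadj
    have hv12 : v ∈ V1 ∪ V2 := by
      have hle := hf.1 v
      rcases Nat.lt_or_ge (f v) 2 with h2 | h2
      · have h1 : f v = 1 := by omega
        exact Finset.mem_union_left _ (by simp [hV1, h1])
      · have h2' : f v = 2 := by omega
        exact Finset.mem_union_right _ (by simp [hV2, h2'])
    have hvS : v ∈ Sf := by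
      have hadj := hn v
      have hnv : n v ∉ Pf := fun hmem => hvno (n v) hmem hadj
      have hnvS : n v ∉ S := fun hmem =>
        hnv (Finset.mem_union_left _ (Finset.mem_union_left _
          (by rw [hSf, Set.mem_toFinset]; exact hmem)))
      rcases hS hadj with h1 | h1
      · rw [hSf, Set.mem_toFinset]; exact h1
      · exact absurd h1 hnvS
    exact Finset.mem_inter.2 ⟨hvS, hv12⟩
  -- g is an OITRDF
  have hOIT : IsOITRDF G g := by
    refine ⟨⟨⟨hgle, ?_⟩, ?_⟩, ?_⟩
    · intro v hv
      obtain ⟨hfv, _⟩ := hzero v hv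
      obtain ⟨u, hadj, hu2⟩ := hf.2 v hfv
      exact ⟨u, hadj, hgval2 u hu2⟩
    · intro u hu v hv hadj
      simp only [Set.mem_setOf_eq] at hu hv
      have huS : u ∉ S := fun hm => by
        have := hgpos u (hSfT u hm); omega
      have hvS : v ∉ S := fun hm => by
        have := hgpos v (hSfT v hm); omega
      rcases hS hadj with h1 | h1
      · exact huS h1
      · exact hvS h1
    · intro v hv
      have hvT : v ∈ T := by
        by_cases h2 : f v = 2
        · exact hV2T v h2
        · by_cases hm : v ∈ T
          · exact hm
          · rw [hgval0 v h2 hm] at hv; omega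
      rw [hT, Finset.mem_union] at hvT
      rcases hvT with hvP | hvN
      · by_cases hb : v ∈ Bad
        · refine ⟨n v, hn v, hgpos _ ?_⟩
          exact Finset.mem_union_right _ (by rw [hNf]; exact Finset.mem_image_of_mem n hb)
        · rw [hBad, Finset.mem_filter] at hb
          push_neg at hb
          obtain ⟨u, huP, huadj⟩ := hb hvP
          exact ⟨u, huadj, hgpos _ (Finset.mem_union_left _ huP)⟩
      · rw [hNf, Finset.mem_image] at hvN
        obtain ⟨w, hwB, hwv⟩ := hvN
        have hwP : w ∈ Pf := by
          rw [hBad] at hwB; exact Finset.filter_subset _ _ hwB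
        refine ⟨w, ?_, hgpos _ (Finset.mem_union_left _ hwP)⟩
        exact hwv ▸ (hn w).symm
  -- weight bound
  have hwt : ∑ v, g v ≤ Sf.card + ∑ v, f v := by
    have hsumg : ∑ v, g v = ∑ v ∈ V2 ∪ (T \ V2), g v := by
      refine (Finset.sum_subset (Finset.subset_univ _) ?_).symm
      intro x _ hx
      rw [Finset.mem_union, Finset.mem_sdiff] at hx
      push_neg at hx
      have hx2 : f x ≠ 2 := fun h2 => hx.1 (by simp [hV2, h2])
      have hxT : x ∉ T := fun hm => hx.1 (hx.2 hm)
      exact hgval0 x hx2 hxT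
    have hdisj : Disjoint V2 (T \ V2) := Finset.disjoint_sdiff
    have hsum2 : ∑ v ∈ V2, g v = 2 * V2.card := by
      rw [Finset.sum_congr rfl (fun v hv => by
        rw [hV2, Finset.mem_filter] at hv
        exact hgval2 v hv.2 : ∀ v ∈ V2, g v = 2)]
      rw [Finset.sum_const, smul_eq_mul]; ring
    have hsum1 : ∑ v ∈ T \ V2, g v = (T \ V2).card := by
      rw [Finset.sum_congr rfl (fun v hv => by
        rw [Finset.mem_sdiff] at hv
        have h2 : f v ≠ 2 := fun hh => hv.2 (by simp [hV2, hh])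
        exact hgval1 v h2 hv.1 : ∀ v ∈ T \ V2, g v = 1)]
      simp
    have hsumf : 2 * V2.card + V1.card ≤ ∑ v, f v := by
      have hd : Disjoint V1 V2 := by
        rw [Finset.disjoint_left]
        intro a ha hb
        rw [hV1, Finset.mem_filter] at ha
        rw [hV2, Finset.mem_filter] at hb
        omega
      have hle : ∑ v ∈ V1 ∪ V2, f v ≤ ∑ v, f v :=
        Finset.sum_le_sum_of_subset (Finset.subset_univ _)
      rw [Finset.sum_union hd] at hle
      have e1 : ∑ v ∈ V1, f v = V1.card := by
        rw [Finset.sum_congr rfl (fun v hv => by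
          rw [hV1, Finset.mem_filter] at hv; exact hv.2 : ∀ v ∈ V1, f v = 1)]
        simp
      have e2 : ∑ v ∈ V2, f v = 2 * V2.card := by
        rw [Finset.sum_congr rfl (fun v hv => by
          rw [hV2, Finset.mem_filter] at hv; exact hv.2 : ∀ v ∈ V2, f v = 2)]
        rw [Finset.sum_const, smul_eq_mul]; ring
      omega
    have hcard : (T \ V2).card ≤ Sf.card + V1.card := by
      have hsub : T \ V2 ⊆ (Sf \ (V1 ∪ V2)) ∪ V1 ∪ Nf := by
        intro x hx
        rw [Finset.mem_sdiff] at hx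
        obtain ⟨hxT, hxV2⟩ := hx
        rw [hT, Finset.mem_union] at hxT
        rcases hxT with hxP | hxN
        · rw [hPf, Finset.mem_union, Finset.mem_union] at hxP
          rcases hxP with (hxS | hxV1) | hxV2'
          · by_cases hx1 : x ∈ V1
            · exact Finset.mem_union_left _ (Finset.mem_union_right _ hx1)
            · refine Finset.mem_union_left _ (Finset.mem_union_left _ ?_)
              rw [Finset.mem_sdiff, Finset.mem_union]
              exact ⟨hxS, fun hh => hh.elim hx1 hxV2⟩
          · exact Finset.mem_union_left _ (Finset.mem_union_right _ hxV1)
          · exact absurd hxV2' hxV2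
        · exact Finset.mem_union_right _ hxN
      have h1 : (T \ V2).card ≤ (Sf \ (V1 ∪ V2)).card + V1.card + Nf.card := by
        calc (T \ V2).card ≤ ((Sf \ (V1 ∪ V2)) ∪ V1 ∪ Nf).card := Finset.card_le_card hsub
          _ ≤ ((Sf \ (V1 ∪ V2)) ∪ V1).card + Nf.card := Finset.card_union_le _ _
          _ ≤ (Sf \ (V1 ∪ V2)).card + V1.card + Nf.card :=
              Nat.add_le_add_right (Finset.card_union_le _ _) _
      have h2 : Nf.card ≤ (Sf ∩ (V1 ∪ V2)).card := by
        calc Nf.card ≤ Bad.card := by rw [hNf]; exact Finset.card_image_le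
          _ ≤ (Sf ∩ (V1 ∪ V2)).card := Finset.card_le_card hBadsub
      have h3 : (Sf \ (V1 ∪ V2)).card + (Sf ∩ (V1 ∪ V2)).card = Sf.card :=
        Finset.card_sdiff_add_card_inter _ _
      omega
    rw [hsumg, Finset.sum_union hdisj, hsum2, hsum1]
    omega
  have hScard' : Sf.card = vertexCoverNum G := by
    rw [hSf, ← Set.ncard_eq_toFinset_card', hScard]
  calc oitRomanDomNum G ≤ ∑ v, g v := Nat.sInf_le ⟨g, hOIT, rfl⟩
    _ ≤ Sf.card + ∑ v, f v := hwt
    _ = vertexCoverNum G + romanDomNum G := by rw [hScard', hfsum]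

/-- If `γ_oitR(G) = α(G) + 2γ(G)` for a graph with no isolated vertex, then `G` is a
Roman graph, i.e. `γ_R(G) = 2γ(G)`. -/
theorem stmt5 {V : Type*} [Fintype V] (G : SimpleGraph V)
    (hiso : ∀ v : V, ∃ u, G.Adj v u)
    (h : oitRomanDomNum G = vertexCoverNum G + 2 * domNum G) :
    romanDomNum G = 2 * domNum G := by
  have hA := roman_le G
  have hB := oit_le G hiso
  rw [h] at hB
  omega

end OITRPaper
end

section
/- Let G be a finite simple graph with no isolated vertex. Then γ_oitR(G) ≤ γ_{t,oi}(G) + γ(G). -/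
namespace OITRPaper

variable {V : Type*}

variable [Fintype V]

/-- For any graph with no isolated vertex, `γ_oitR(G) ≤ γ_{t,oi}(G) + γ(G)`. -/
theorem stmt6 {V : Type*} [Fintype V] (G : SimpleGraph V)
    (hiso : ∀ v : V, ∃ u, G.Adj v u) :
    oitRomanDomNum G ≤ oiTotalDomNum G + domNum G := by
  classical
  have key : ∀ A : Set V, (∑ v : V, (if v ∈ A then 1 else 0)) = A.ncard := by
    intro A
    have hA : A.toFinset = Finset.univ.filter (· ∈ A) := by ext; simp
    rw [Set.ncard_eq_toFinset_card', hA, Finset.card_filter]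
  have hSne : {m | ∃ S : Set V, IsTotalDomSet G S ∧ IsIndepSet G Sᶜ ∧ S.ncard = m}.Nonempty :=
    ⟨(Set.univ : Set V).ncard, Set.univ,
      fun v => (hiso v).imp (fun u h => ⟨Set.mem_univ u, h⟩),
      by simp [IsIndepSet], rfl⟩
  have hDne : {m | ∃ S : Set V, IsDomSet G S ∧ S.ncard = m}.Nonempty :=
    ⟨(Set.univ : Set V).ncard, Set.univ, fun v hv => absurd (Set.mem_univ v) hv, rfl⟩
  obtain ⟨S, hStot, hSind, hScard⟩ := Nat.sInf_mem hSne
  obtain ⟨D, hDdom, hDcard⟩ := Nat.sInf_mem hDne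
  choose g hgS hgadj using hStot
  set h : V → V := fun d => if d ∈ S then d else g d with hh
  set T : Set V := h '' D with hT
  have hTS : T ⊆ S := by
    rintro x ⟨d, _, rfl⟩
    by_cases hd : d ∈ S <;> simp [hh, hd, hgS d]
  set f : V → ℕ := fun v => (if v ∈ S then 1 else 0) + (if v ∈ T then 1 else 0) with hf
  have hf0 : ∀ v, f v = 0 → v ∉ S ∧ v ∉ T := by
    intro v hv
    constructor <;> intro h' <;> simp [hf, h'] at hv
  have hfT : ∀ v, v ∈ T → f v = 2 := fun v hv => by simp [hf, hv, hTS hv]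
  have hOITRDF : IsOITRDF G f := by
    refine ⟨⟨⟨fun v => by by_cases h1 : v ∈ S <;> by_cases h2 : v ∈ T <;> simp [hf, h1, h2], ?_⟩, ?_⟩, ?_⟩
    · intro v hv
      obtain ⟨hvS, hvT⟩ := hf0 v hv
      by_cases hvD : v ∈ D
      · refine ⟨g v, ?_, hfT _ ⟨v, hvD, by simp [hh, hvS]⟩⟩
        have := hgadj v
        simpa [hh, hvS] using this
      · obtain ⟨d, hdD, hadj⟩ := hDdom v hvD
        have hdS : d ∈ S := by
          by_contra hdS
          exact hSind hvS hdS hadj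
        exact ⟨d, hadj, hfT _ ⟨d, hdD, by simp [hh, hdS]⟩⟩
    · intro u hu v hv hadj
      exact hSind (hf0 u hu).1 (hf0 v hv).1 hadj
    · intro v _
      refine ⟨g v, hgadj v, ?_⟩
      simp [hf, hgS v]
  have hsum : ∑ v, f v = S.ncard + T.ncard := by
    rw [hf, Finset.sum_add_distrib, key S, key T]
  have hTle : T.ncard ≤ D.ncard := Set.ncard_image_le D.toFinite
  calc oitRomanDomNum G ≤ ∑ v, f v := Nat.sInf_le ⟨f, hOITRDF, rfl⟩
    _ = S.ncard + T.ncard := hsum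
    _ ≤ S.ncard + D.ncard := by omega
    _ = oiTotalDomNum G + domNum G := by rw [hScard, hDcard]; rfl

end OITRPaper
end

section
/- Let G be a finite simple graph with no isolated vertex. Then γ_oitR(G) ≤ γ_oiR(G) + γ(G). -/
/-!
Take a minimum OIRDF `f` and a minimum dominating set `D`, and pick a neighbour `c v` of every
vertex `v`. Raise `f` to weight at least `1` on the image of `D` under `v ↦ v` if `f v = 0` and
`v ↦ c v` otherwise. Zeros are only removed, so the result is still an OIRDF; it has weight at
most `∑ f + |D|`; and every vertex of positive weight now has a neighbour of positive weight: a
former zero sees a `2`, a vertex of `D` sees its raised `c v`, and any other vertex sees a vertex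
of `D`, which has positive weight or has been raised.
-/

namespace OITRPaper

variable {V : Type*}

variable [Fintype V]

section

variable {V : Type*} {G : SimpleGraph V}

noncomputable def raiseOn (f : V → ℕ) (T : Set V) : V → ℕ :=
  fun v => max (f v) (T.indicator 1 v)

lemma le_raiseOn (f : V → ℕ) (T : Set V) (v : V) : f v ≤ raiseOn f T v :=
  le_max_left _ _

lemma one_le_raiseOn (f : V → ℕ) {T : Set V} {v : V} (hv : v ∈ T) : 1 ≤ raiseOn f T v := by
  simp [raiseOn, hv]

lemma eq_zero_of_raiseOn_eq_zero {f : V → ℕ} {T : Set V} {v : V} (hv : raiseOn f T v = 0) :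
    f v = 0 :=
  Nat.eq_zero_of_le_zero (hv ▸ le_raiseOn f T v)

lemma sum_raiseOn_le [Fintype V] (f : V → ℕ) (T : Set V) :
    ∑ v, raiseOn f T v ≤ ∑ v, f v + T.ncard := by
  classical
  calc ∑ v, raiseOn f T v ≤ ∑ v, (f v + T.indicator 1 v) :=
        Finset.sum_le_sum fun v _ => max_le_add_of_nonneg (Nat.zero_le _) (Nat.zero_le _)
    _ = ∑ v, f v + T.ncard := by
        simp [Finset.sum_add_distrib, Set.indicator_apply, Finset.sum_boole,
          Set.ncard_eq_toFinset_card']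

lemma isOIRDF_raiseOn {f : V → ℕ} (hf : IsOIRDF G f) (T : Set V) :
    IsOIRDF G (raiseOn f T) := by
  obtain ⟨⟨hf2, hdom⟩, hindep⟩ := hf
  refine ⟨⟨fun v => max_le (hf2 v) ?_, fun v hv => ?_⟩, fun u hu v hv => ?_⟩
  · by_cases hv : v ∈ T <;> simp [hv]
  · obtain ⟨u, hadj, hu⟩ := hdom v (eq_zero_of_raiseOn_eq_zero hv)
    refine ⟨u, hadj, le_antisymm (max_le (hf2 u) ?_) (hu ▸ le_raiseOn f T u)⟩
    by_cases hu : u ∈ T <;> simp [hu]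
  · exact hindep (eq_zero_of_raiseOn_eq_zero hu) (eq_zero_of_raiseOn_eq_zero hv)

lemma isOITRDF_raiseOn {f : V → ℕ} (hf : IsOIRDF G f) {T : Set V}
    (hT : ∀ v, 1 ≤ f v → ∃ u, G.Adj v u ∧ (1 ≤ f u ∨ u ∈ T)) :
    IsOITRDF G (raiseOn f T) := by
  refine ⟨isOIRDF_raiseOn hf T, fun v _ => ?_⟩
  rcases Nat.eq_zero_or_pos (f v) with hv | hv
  · obtain ⟨u, hadj, hu⟩ := hf.1.2 v hv
    exact ⟨u, hadj, le_trans (by omega) (le_raiseOn f T u)⟩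
  · obtain ⟨u, hadj, hu | hu⟩ := hT v hv
    · exact ⟨u, hadj, hu.trans (le_raiseOn f T u)⟩
    · exact ⟨u, hadj, one_le_raiseOn f hu⟩

lemma IsOIRDF.exists_isOITRDF_sum_le [Fintype V] (hiso : ∀ v, ∃ u, G.Adj v u) {f : V → ℕ}
    (hf : IsOIRDF G f) {D : Set V} (hD : IsDomSet G D) :
    ∃ g, IsOITRDF G g ∧ ∑ v, g v ≤ ∑ v, f v + D.ncard := by
  classical
  choose c hc using hiso
  set T := (fun v => if f v = 0 then v else c v) '' D
  have hT : ∀ v, 1 ≤ f v → ∃ u, G.Adj v u ∧ (1 ≤ f u ∨ u ∈ T) := by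
    intro v hv
    by_cases hvD : v ∈ D
    · exact ⟨c v, hc v, Or.inr ⟨v, hvD, if_neg (by omega)⟩⟩
    · obtain ⟨u, huD, hadj⟩ := hD v hvD
      refine ⟨u, hadj, ?_⟩
      by_cases hu : f u = 0
      · exact Or.inr ⟨u, huD, if_pos hu⟩
      · exact Or.inl (Nat.one_le_iff_ne_zero.mpr hu)
  refine ⟨raiseOn f T, isOITRDF_raiseOn hf hT, (sum_raiseOn_le f T).trans ?_⟩
  exact Nat.add_le_add_left (Set.ncard_image_le D.toFinite) _

lemma exists_isDomSet_ncard_eq_domNum (G : SimpleGraph V) :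
    ∃ D, IsDomSet G D ∧ D.ncard = domNum G :=
  Nat.sInf_mem (s := {m | ∃ S : Set V, IsDomSet G S ∧ S.ncard = m})
    ⟨_, Set.univ, fun v hv => absurd (Set.mem_univ v) hv, rfl⟩

variable [Fintype V]

lemma exists_isOIRDF_sum_eq_oiRomanDomNum (G : SimpleGraph V) :
    ∃ f, IsOIRDF G f ∧ ∑ v, f v = oiRomanDomNum G :=
  Nat.sInf_mem (s := {w | ∃ f : V → ℕ, IsOIRDF G f ∧ ∑ v, f v = w})
    ⟨_, fun _ => 2, ⟨⟨fun _ => le_rfl, by simp⟩, by simp [IsIndepSet]⟩, rfl⟩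

lemma oitRomanDomNum_le {g : V → ℕ} (hg : IsOITRDF G g) : oitRomanDomNum G ≤ ∑ v, g v :=
  Nat.sInf_le ⟨g, hg, rfl⟩

end

/-- For any graph with no isolated vertex, `γ_oitR(G) ≤ γ_oiR(G) + γ(G)`. -/
theorem stmt7 {V : Type*} [Fintype V] (G : SimpleGraph V)
    (hiso : ∀ v : V, ∃ u, G.Adj v u) :
    oitRomanDomNum G ≤ oiRomanDomNum G + domNum G := by
  obtain ⟨f, hf, hfw⟩ := exists_isOIRDF_sum_eq_oiRomanDomNum G
  obtain ⟨D, hD, hDw⟩ := exists_isDomSet_ncard_eq_domNum G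
  obtain ⟨g, hg, hgw⟩ := hf.exists_isOITRDF_sum_le hiso hD
  calc oitRomanDomNum G ≤ ∑ v, g v := oitRomanDomNum_le hg
    _ ≤ oiRomanDomNum G + domNum G := hfw ▸ hDw ▸ hgw

end OITRPaper
end

section
/- Let G be a finite simple claw-free graph with minimum degree at least 3. Then γ_oitR(G) = γ_oiR(G). -/
namespace OITRPaper

variable {V : Type*}

variable [Fintype V]

/-- For a claw-free graph of minimum degree at least 3, `γ_oitR(G) = γ_oiR(G)`. -/
theorem stmt8 {V : Type*} [Fintype V] (G : SimpleGraph V) [DecidableRel G.Adj]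
    (hclaw : ClawFree G) (hdeg : ∀ v : V, 3 ≤ G.degree v) :
    oitRomanDomNum G = oiRomanDomNum G := by
  unfold oitRomanDomNum oiRomanDomNum
  congr 1
  ext w
  constructor
  · rintro ⟨f, ⟨hf, _⟩, hw⟩
    exact ⟨f, hf, hw⟩
  · rintro ⟨f, hf, hw⟩
    refine ⟨f, ⟨hf, ?_⟩, hw⟩
    classical
    intro v hv
    by_contra h
    push_neg at h
    have hz : ∀ u, G.Adj v u → f u = 0 := by
      intro u hu
      have := h u hu
      omega
    -- get three distinct neighbors
    have hs := hdeg v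
    rw [← G.card_neighborFinset_eq_degree] at hs
    obtain ⟨a, ha⟩ := Finset.card_pos.mp (lt_of_lt_of_le (by norm_num) hs)
    have h2 : 0 < ((G.neighborFinset v).erase a).card := by
      have := Finset.card_erase_of_mem ha; omega
    obtain ⟨b, hb⟩ := Finset.card_pos.mp h2
    have h3 : 0 < (((G.neighborFinset v).erase a).erase b).card := by
      have := Finset.card_erase_of_mem hb
      have := Finset.card_erase_of_mem ha
      omega
    obtain ⟨c, hc⟩ := Finset.card_pos.mp h3
    have hba : b ≠ a := (Finset.mem_erase.mp hb).1
    have hcb : c ≠ b := (Finset.mem_erase.mp hc).1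
    have hca : c ≠ a := (Finset.mem_erase.mp (Finset.mem_erase.mp hc).2).1
    have hva : G.Adj v a := (G.mem_neighborFinset v a).mp ha
    have hvb : G.Adj v b := (G.mem_neighborFinset v b).mp (Finset.mem_erase.mp hb).2
    have hvc : G.Adj v c := (G.mem_neighborFinset v c).mp
      (Finset.mem_erase.mp (Finset.mem_erase.mp hc).2).2
    have hind := hf.2
    have hfa := hz a hva
    have hfb := hz b hvb
    have hfc := hz c hvc
    rcases hclaw v a b c hva hvb hvc (Ne.symm hba) (Ne.symm hca) (Ne.symm hcb) with
      hab | hac | hbc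
    · exact hind hfa hfb hab
    · exact hind hfa hfc hac
    · exact hind hfb hfc hbc

end OITRPaper
end

section
/- Let G be a finite simple connected graph with at least two vertices and minimum degree δ. Then γ_oitR(G) ≤ 2α(G) + γ(G) − δ + 1. -/
namespace OITRPaper

variable {V : Type*}

variable [Fintype V]

/-- For a connected graph with at least two vertices and minimum degree `δ`,
`γ_oitR(G) ≤ 2α(G) + γ(G) - δ + 1`. -/
theorem stmt9 {V : Type*} [Fintype V] (G : SimpleGraph V) [DecidableRel G.Adj]
    (hconn : G.Connected) (hcard : 2 ≤ Fintype.card V) :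
    oitRomanDomNum G ≤ 2 * vertexCoverNum G + domNum G - G.minDegree + 1 := by
  classical
  have hne : Nonempty V := Fintype.card_pos_iff.mp (by omega)
  -- every vertex has a neighbor
  have hadj : ∀ s : V, ∃ w : V, G.Adj s w := by
    intro s
    obtain ⟨w, hw⟩ := Fintype.exists_ne_of_one_lt_card (by omega) s
    obtain ⟨p⟩ := hconn.preconnected s w
    cases p with
    | nil => exact absurd rfl hw
    | cons h _ => exact ⟨_, h⟩
  -- minimum vertex cover S
  have hScov_ne : {m | ∃ S : Set V, IsVertexCover G S ∧ S.ncard = m}.Nonempty :=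
    ⟨(Set.univ : Set V).ncard, Set.univ, fun u w _ => Or.inl trivial, rfl⟩
  obtain ⟨S, hScov, hScard⟩ :
      ∃ S : Set V, IsVertexCover G S ∧ S.ncard = vertexCoverNum G :=
    Nat.sInf_mem hScov_ne
  -- minimum dominating set D
  have hDdom_ne : {m | ∃ S : Set V, IsDomSet G S ∧ S.ncard = m}.Nonempty :=
    ⟨(Set.univ : Set V).ncard, Set.univ, fun w hw => absurd trivial hw, rfl⟩
  obtain ⟨D, hDdom, hDcard⟩ :
      ∃ D : Set V, IsDomSet G D ∧ D.ncard = domNum G :=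
    Nat.sInf_mem hDdom_ne
  -- there is a vertex outside S
  have hvex : ∃ v : V, v ∉ S := by
    by_contra h
    push_neg at h
    obtain ⟨x⟩ := hne
    have hcov' : IsVertexCover G ({x}ᶜ : Set V) := by
      intro u w huw
      rcases eq_or_ne u x with hu | hu
      · right
        simp only [Set.mem_compl_iff, Set.mem_singleton_iff]
        intro hwx
        exact G.ne_of_adj huw (hu.trans hwx.symm)
      · exact Or.inl hu
    have h1 : vertexCoverNum G ≤ ({x}ᶜ : Set V).ncard :=
      Nat.sInf_le ⟨{x}ᶜ, hcov', rfl⟩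
    have h2 : ({x}ᶜ : Set V).ncard < (Set.univ : Set V).ncard :=
      Set.ncard_lt_ncard (by
        constructor
        · exact Set.subset_univ _
        · intro hsub
          exact (hsub (Set.mem_univ x)) rfl) (Set.finite_univ)
    have h3 : S = Set.univ := Set.eq_univ_of_forall h
    rw [h3] at hScard
    omega
  obtain ⟨v, hvS⟩ := hvex
  set Nv : Set V := G.neighborSet v with hNv_def
  have hNvS : Nv ⊆ S := fun u hu => ((hScov hu).resolve_left hvS)
  -- the "bad" set B and helper neighbors
  set B : Set V := {s : V | s ∈ S ∧ ∀ w : V, G.Adj s w → w ∉ S ∧ w ≠ v ∧ w ∉ D}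
    with hB_def
  set t : V → V := fun s => (hadj s).choose with ht_def
  have ht : ∀ s : V, G.Adj s (t s) := fun s => (hadj s).choose_spec
  set H : Set V := t '' B with hH_def
  have hBD : B ⊆ D := by
    intro s hs
    by_contra hsD
    obtain ⟨d, hdD, hsd⟩ := hDdom s hsD
    exact (hs.2 d hsd).2.2 hdD
  have hBNv : ∀ s ∈ B, s ∉ Nv := by
    intro s hs hsNv
    exact (hs.2 v ((G.adj_symm hsNv))).2.1 rfl
  -- the two level sets
  set T2 : Set V := (S \ Nv) ∪ (Nv ∩ D) with hT2_def
  set T1 : Set V := ({v} : Set V) ∪ (Nv \ D) ∪ ((D ∩ Sᶜ) \ {v}) ∪ H with hT1_def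
  set f : V → ℕ := fun u => if u ∈ T2 then 2 else if u ∈ T1 then 1 else 0 with hf_def
  have hT2S : T2 ⊆ S := by
    intro u hu
    rcases hu with hu | hu
    · exact hu.1
    · exact hNvS hu.1
  have hSpos : ∀ u ∈ S, 1 ≤ f u := by
    intro u hu
    simp only [hf_def]
    by_cases h2 : u ∈ T2
    · simp [h2]
    · have h1 : u ∈ T1 := by
        by_cases hun : u ∈ Nv
        · by_cases hud : u ∈ D
          · exact absurd (Or.inr ⟨hun, hud⟩) h2
          · exact Or.inl (Or.inl (Or.inr ⟨hun, hud⟩))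
        · exact absurd (Or.inl ⟨hu, hun⟩) h2
      simp [h2, h1]
  have hvpos : 1 ≤ f v := by
    simp only [hf_def]
    by_cases h2 : v ∈ T2
    · simp [h2]
    · have h1 : v ∈ T1 := Or.inl (Or.inl (Or.inl rfl))
      simp [h2, h1]
  have hDpos : ∀ u ∈ D, 1 ≤ f u := by
    intro u hu
    by_cases huS : u ∈ S
    · exact hSpos u huS
    · rcases eq_or_ne u v with h | h
      · rw [h]; exact hvpos
      · simp only [hf_def]
        by_cases h2 : u ∈ T2
        · simp [h2]
        · have h1 : u ∈ T1 := Or.inl (Or.inr ⟨⟨hu, huS⟩, h⟩)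
          simp [h2, h1]
  have hHpos : ∀ u ∈ H, 1 ≤ f u := by
    intro u hu
    simp only [hf_def]
    by_cases h2 : u ∈ T2
    · simp [h2]
    · have h1 : u ∈ T1 := Or.inr hu
      simp [h2, h1]
  have hzeroS : ∀ u : V, f u = 0 → u ∉ S := by
    intro u hu huS
    have := hSpos u huS
    omega
  have hzerov : ∀ u : V, f u = 0 → u ≠ v := by
    intro u hu h
    rw [h] at hu
    omega
  have hzeroD : ∀ u : V, f u = 0 → u ∉ D := by
    intro u hu huD
    have := hDpos u huD
    omega
  have hT2two : ∀ u ∈ T2, f u = 2 := by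
    intro u hu
    simp [hf_def, hu]
  -- f is an OITRDF
  have hOITRDF : IsOITRDF G f := by
    refine ⟨⟨⟨?_, ?_⟩, ?_⟩, ?_⟩
    · -- f ≤ 2
      intro u
      simp only [hf_def]
      split <;> [omega; (split <;> omega)]
    · -- every zero has a 2-neighbor
      intro u hu
      have huS : u ∉ S := hzeroS u hu
      have huD : u ∉ D := hzeroD u hu
      obtain ⟨d, hdD, hud⟩ := hDdom u huD
      have hdS : d ∈ S := (hScov hud).resolve_left huS
      have hdT2 : d ∈ T2 := by
        by_cases hdn : d ∈ Nv
        · exact Or.inr ⟨hdn, hdD⟩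
        · exact Or.inl ⟨hdS, hdn⟩
      exact ⟨d, hud, hT2two d hdT2⟩
    · -- zeros form an independent set
      intro u hu w hw huw
      have huS : u ∉ S := hzeroS u hu
      have hwS : w ∉ S := hzeroS w hw
      rcases hScov huw with h | h
      · exact huS h
      · exact hwS h
    · -- total condition
      intro u hu
      have hupos : u ∈ T2 ∨ u ∈ T1 := by
        by_contra h
        push_neg at h
        simp [hf_def, h.1, h.2] at hu
      have hcase : u ∈ (S \ Nv) ∨ u ∈ Nv ∨ u = v ∨ u ∈ (D ∩ Sᶜ) \ {v} ∨ u ∈ H := by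
        rcases hupos with hu2 | hu1
        · rcases hu2 with h | h
          · exact Or.inl h
          · exact Or.inr (Or.inl h.1)
        · rcases hu1 with ((h | h) | h) | h
          · exact Or.inr (Or.inr (Or.inl h))
          · exact Or.inr (Or.inl h.1)
          · exact Or.inr (Or.inr (Or.inr (Or.inl h)))
          · exact Or.inr (Or.inr (Or.inr (Or.inr h)))
      rcases hcase with h | h | h | h | h
      · -- u ∈ S \ Nv
        by_cases hgood : ∃ w : V, G.Adj u w ∧ (w ∈ S ∨ w = v ∨ w ∈ D)
        · obtain ⟨w, huw, hw⟩ := hgood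
          refine ⟨w, huw, ?_⟩
          rcases hw with hw | hw | hw
          · exact hSpos w hw
          · rw [hw]; exact hvpos
          · exact hDpos w hw
        · push_neg at hgood
          have huB : u ∈ B := ⟨h.1, fun w hw => hgood w hw⟩
          exact ⟨t u, ht u, hHpos (t u) ⟨u, huB, rfl⟩⟩
      · -- u ∈ Nv : v is a positive neighbor
        exact ⟨v, G.adj_symm h, hvpos⟩
      · -- u = v : any neighbor is in S
        subst h
        obtain ⟨w, hw⟩ := hadj u
        exact ⟨w, hw, hSpos w (hNvS hw)⟩
      · -- u ∈ D ∩ Sᶜ : any neighbor is in S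
        obtain ⟨w, hw⟩ := hadj u
        have hwS : w ∈ S := (hScov hw).resolve_left h.1.2
        exact ⟨w, hw, hSpos w hwS⟩
      · -- u ∈ H : the corresponding B-vertex is a positive neighbor
        obtain ⟨s, hsB, hsu⟩ := h
        subst hsu
        exact ⟨s, G.adj_symm (ht s), hSpos s hsB.1⟩
  -- weight bound
  have hle : oitRomanDomNum G ≤ ∑ u, f u := Nat.sInf_le ⟨f, hOITRDF, rfl⟩
  -- indicator sums
  have hsum : ∑ u, f u ≤ 2 * T2.ncard + T1.ncard := by
    have hind : ∀ P : Set V, (∑ u : V, @ite ℕ (u ∈ P) (Classical.propDecidable _) 1 0) = P.ncard := by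
      intro P
      rw [← Finset.card_filter, Set.ncard_eq_toFinset_card']
      congr 1
      ext x
      simp
    have hptw : ∀ u : V, f u ≤ 2 * (@ite ℕ (u ∈ T2) (Classical.propDecidable _) 1 0)
        + (@ite ℕ (u ∈ T1) (Classical.propDecidable _) 1 0) := by
      intro u
      by_cases h2 : u ∈ T2 <;> by_cases h1 : u ∈ T1 <;>
        simp [hf_def, h2, h1]
    calc ∑ u, f u ≤ ∑ u, (2 * (@ite ℕ (u ∈ T2) (Classical.propDecidable _) 1 0)
            + (@ite ℕ (u ∈ T1) (Classical.propDecidable _) 1 0)) :=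
          Finset.sum_le_sum (fun u _ => hptw u)
      _ = 2 * T2.ncard + T1.ncard := by
          rw [Finset.sum_add_distrib, ← Finset.mul_sum, hind T2, hind T1]
  -- cardinalities
  set α := vertexCoverNum G
  set γ := domNum G
  set d := Nv.ncard with hd_def
  have hdeg : d = G.degree v := by
    rw [hd_def, hNv_def, Set.ncard_eq_toFinset_card', ← SimpleGraph.neighborFinset_def]
    rfl
  have hδd : G.minDegree ≤ d := hdeg ▸ G.minDegree_le_degree v
  have hdα : d ≤ α := hScard ▸ Set.ncard_le_ncard hNvS S.toFinite
  have hSNv : (S \ Nv).ncard = α - d := by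
    rw [Set.ncard_diff hNvS Nv.toFinite, hScard]
  have hT2card : T2.ncard ≤ (α - d) + (Nv ∩ D).ncard := by
    calc T2.ncard ≤ (S \ Nv).ncard + (Nv ∩ D).ncard := Set.ncard_union_le _ _
      _ = (α - d) + (Nv ∩ D).ncard := by rw [hSNv]
  have hT1card : T1.ncard ≤ 1 + (Nv \ D).ncard + ((D ∩ Sᶜ) \ {v}).ncard + H.ncard := by
    calc T1.ncard ≤ (({v} : Set V) ∪ (Nv \ D) ∪ ((D ∩ Sᶜ) \ {v})).ncard + H.ncard :=
          Set.ncard_union_le _ _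
      _ ≤ (({v} : Set V) ∪ (Nv \ D)).ncard + ((D ∩ Sᶜ) \ {v}).ncard + H.ncard := by
          have := Set.ncard_union_le (({v} : Set V) ∪ (Nv \ D)) ((D ∩ Sᶜ) \ {v})
          omega
      _ ≤ (({v} : Set V).ncard + (Nv \ D).ncard) + ((D ∩ Sᶜ) \ {v}).ncard + H.ncard := by
          have := Set.ncard_union_le ({v} : Set V) (Nv \ D)
          omega
      _ = 1 + (Nv \ D).ncard + ((D ∩ Sᶜ) \ {v}).ncard + H.ncard := by
          rw [Set.ncard_singleton]
  have hNvsplit : (Nv ∩ D).ncard + (Nv \ D).ncard = d :=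
    Set.ncard_inter_add_ncard_diff_eq_ncard Nv D Nv.toFinite
  have hHB : H.ncard ≤ B.ncard := Set.ncard_image_le B.toFinite
  -- budget: three disjoint subsets of D
  have hbudget : (Nv ∩ D).ncard + ((D ∩ Sᶜ) \ {v}).ncard + B.ncard ≤ γ := by
    have hd1 : Disjoint (Nv ∩ D) ((D ∩ Sᶜ) \ {v}) := by
      rw [Set.disjoint_left]
      rintro x ⟨hx1, _⟩ ⟨⟨_, hx2⟩, _⟩
      exact hx2 (hNvS hx1)
    have hd2 : Disjoint ((Nv ∩ D) ∪ ((D ∩ Sᶜ) \ {v})) B := by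
      rw [Set.disjoint_left]
      rintro x (⟨hx1, _⟩ | ⟨⟨_, hx2⟩, _⟩) hxB
      · exact hBNv x hxB hx1
      · exact hx2 hxB.1
    have hsub : (Nv ∩ D) ∪ ((D ∩ Sᶜ) \ {v}) ∪ B ⊆ D := by
      rintro x ((⟨_, hx⟩ | ⟨⟨hx, _⟩, _⟩) | hx)
      · exact hx
      · exact hx
      · exact hBD hx
    calc (Nv ∩ D).ncard + ((D ∩ Sᶜ) \ {v}).ncard + B.ncard
        = ((Nv ∩ D) ∪ ((D ∩ Sᶜ) \ {v})).ncard + B.ncard := by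
          rw [Set.ncard_union_eq hd1 (Set.toFinite _) (Set.toFinite _)]
      _ = ((Nv ∩ D) ∪ ((D ∩ Sᶜ) \ {v}) ∪ B).ncard := by
          rw [Set.ncard_union_eq hd2 (Set.toFinite _) (Set.toFinite _)]
      _ ≤ D.ncard := Set.ncard_le_ncard hsub D.toFinite
      _ = γ := hDcard
  omega

end OITRPaper
end

section
/- For any integers n and k with 2 ≤ k ≤ ⌊n/2⌋, the independence number of the circulant graph C(n,k) equals ⌊n/(k+1)⌋, i.e., β(C(n,k)) = ⌊n/(k+1)⌋. -/
namespace OITRPaper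

variable {V : Type*}

variable [Fintype V]

/-- The circulant graph `C(n,k)` on vertex set `ℤ/nℤ` (modelled as `Fin n`):
distinct vertices `i, j` are adjacent iff `j ≡ i + t (mod n)` or `i ≡ j + t (mod n)`
for some `t ∈ {1, …, k}`. -/
def circulant (n k : ℕ) : SimpleGraph (Fin n) where
  Adj i j := i ≠ j ∧ ∃ t : ℕ, 1 ≤ t ∧ t ≤ k ∧
      ((i.val + t) % n = j.val ∨ (j.val + t) % n = i.val)
  symm := ⟨by
    rintro i j ⟨hij, t, h1, h2, h⟩
    exact ⟨hij.symm, t, h1, h2, h.symm⟩⟩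
  loopless := ⟨fun i h => h.1 rfl⟩

/-- The wheel graph `W_n` of order `n`: a universal hub vertex (`none`) joined to all
vertices of a cycle of order `n - 1`. -/
def wheel (n : ℕ) : SimpleGraph (Option (Fin (n - 1))) where
  Adj x y :=
    match x, y with
    | none, none => False
    | none, some _ => True
    | some _, none => True
    | some i, some j => i ≠ j ∧
        ((i.val + 1) % (n - 1) = j.val ∨ (j.val + 1) % (n - 1) = i.val)
  symm := ⟨by
    rintro (_ | i) (_ | j) h <;> simp_all
    exact ⟨Ne.symm h.1, h.2.symm⟩⟩
  loopless := ⟨by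
    rintro (_ | i) h <;> simp_all⟩

/-- The direct (tensor) product of two simple graphs. -/
def directProd {α β : Type*} (G : SimpleGraph α) (H : SimpleGraph β) :
    SimpleGraph (α × β) where
  Adj x y := G.Adj x.1 y.1 ∧ H.Adj x.2 y.2
  symm := ⟨fun _ _ ⟨h1, h2⟩ => ⟨h1.symm, h2.symm⟩⟩
  loopless := ⟨fun x h => G.loopless.irrefl x.1 h.1⟩

/-! An independent set `S` of `C(n,k)` packs: the arcs `a, a + 1, …, a + k` for `a ∈ S` are
pairwise disjoint, because an overlap would put two vertices of `S` at cyclic distance at most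
`k`. Hence `|S| (k + 1) ≤ n`. Conversely, the multiples `0, k + 1, …, (m - 1)(k + 1)` with
`m = ⌊n/(k+1)⌋` are pairwise at distance `≥ k + 1` also across the wrap-around, since
`(m - 1)(k + 1) + k < n`. -/

theorem _root_.Nat.mul_add_ne_mul {c t : ℕ} (i j : ℕ) (ht : 0 < t) (htc : t < c) :
    i * c + t ≠ j * c := by
  intro h
  have hmod := congrArg (· % c) h
  simp only [Nat.add_comm (i * c), Nat.add_mul_mod_self_right, Nat.mul_mod_left,
    Nat.mod_eq_of_lt htc] at hmod
  omega

section IndepSet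

variable {n k : ℕ}

theorem IsIndepSet.eq_of_add_mod_eq_add_mod {S : Set (Fin n)}
    (hS : IsIndepSet (circulant n k) S) {a b : Fin n} (ha : a ∈ S) (hb : b ∈ S) {s t : ℕ}
    (hs : s ≤ k) (ht : t ≤ k) (h : (a.val + s) % n = (b.val + t) % n) : a = b := by
  wlog hts : t ≤ s generalizing a b s t
  · exact (this hb ha ht hs h.symm (by omega)).symm
  have hstep : (a.val + (s - t)) % n = b.val := by
    have hmod : a.val + (s - t) ≡ b.val [MOD n] :=
      Nat.ModEq.add_right_cancel' t (by rwa [Nat.add_assoc, Nat.sub_add_cancel hts])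
    rw [hmod, Nat.mod_eq_of_lt b.isLt]
  by_contra hab
  obtain rfl | hlt := hts.eq_or_lt
  · rw [Nat.sub_self, Nat.add_zero, Nat.mod_eq_of_lt a.isLt] at hstep
    exact hab (Fin.ext hstep)
  · exact hS ha hb ⟨hab, s - t, by omega, by omega, Or.inl hstep⟩

theorem IsIndepSet.ncard_mul_succ_le {S : Set (Fin n)} (hS : IsIndepSet (circulant n k) S)
    (hk : k < n) : S.ncard * (k + 1) ≤ n := by
  classical
  let arcPoint : Fin n × ℕ → ℕ := fun p => (p.1.val + p.2) % n
  have hinj : Set.InjOn arcPoint ↑(S.toFinset ×ˢ Finset.range (k + 1)) := by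
    rintro ⟨a, s⟩ has ⟨b, t⟩ hbt h
    simp only [Finset.coe_product, Set.mem_prod, Set.coe_toFinset, Finset.coe_range,
      Set.mem_Iio] at has hbt
    obtain rfl := hS.eq_of_add_mod_eq_add_mod has.1 hbt.1 (by omega) (by omega) h
    have hst : s % n = t % n := Nat.ModEq.add_left_cancel' a.val h
    rw [Nat.mod_eq_of_lt (by omega), Nat.mod_eq_of_lt (by omega)] at hst
    rw [hst]
  calc S.ncard * (k + 1) = (S.toFinset ×ˢ Finset.range (k + 1)).card := by
        rw [Finset.card_product, Finset.card_range, Set.ncard_eq_toFinset_card']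
    _ ≤ (Finset.range n).card :=
        Finset.card_le_card_of_injOn arcPoint
          (fun _ _ => Finset.mem_range.2 (Nat.mod_lt _ (by omega))) hinj
    _ = n := Finset.card_range n

end IndepSet

theorem exists_isIndepSet_circulant_ncard_eq (n k : ℕ) :
    ∃ S : Set (Fin n), IsIndepSet (circulant n k) S ∧ S.ncard = n / (k + 1) := by
  have hroom : ∀ i : Fin (n / (k + 1)), i.val * (k + 1) + k < n := fun i => by
    have := (Nat.le_div_iff_mul_le (Nat.add_one_pos k)).1 i.isLt
    rw [Nat.add_one_mul] at this
    omega
  let multiple : Fin (n / (k + 1)) → Fin n := fun i =>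
    ⟨i.val * (k + 1), (Nat.le_add_right _ k).trans_lt (hroom i)⟩
  have hmultiple : multiple.Injective := fun i j h =>
    Fin.ext (Nat.eq_of_mul_eq_mul_right k.succ_pos (Fin.val_eq_of_eq h))
  have hgap : ∀ i j : Fin (n / (k + 1)), ∀ t, 1 ≤ t → t ≤ k →
      ((multiple i).val + t) % n ≠ (multiple j).val := by
    intro i j t ht htk h
    rw [Nat.mod_eq_of_lt ((Nat.add_le_add_left htk _).trans_lt (hroom i))] at h
    exact Nat.mul_add_ne_mul i j ht (Nat.lt_succ_of_le htk) h
  refine ⟨Set.range multiple, ?_, by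
    rw [Set.ncard_range_of_injective hmultiple, Nat.card_eq_fintype_card, Fintype.card_fin]⟩
  rintro _ ⟨i, rfl⟩ _ ⟨j, rfl⟩ ⟨-, t, ht, htk, hij | hji⟩
  · exact hgap i j t ht htk hij
  · exact hgap j i t ht htk hji

theorem stmt11_general (n k : ℕ) (hkn : k ≤ n / 2) :
    indepNum (circulant n k) = n / (k + 1) := by
  refine IsGreatest.csSup_eq ⟨exists_isIndepSet_circulant_ncard_eq n k, ?_⟩
  rintro _ ⟨S, hS, rfl⟩
  rw [Nat.le_div_iff_mul_le k.succ_pos]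
  rcases Nat.eq_zero_or_pos n with rfl | hn
  · simp [Set.eq_empty_of_isEmpty S]
  · exact hS.ncard_mul_succ_le (by omega)

/-- The independence number of the circulant graph `C(n,k)` is `⌊n/(k+1)⌋`,
for `2 ≤ k ≤ ⌊n/2⌋`. -/
theorem stmt11 (n k : ℕ) (hk2 : 2 ≤ k) (hkn : k ≤ n / 2) :
    indepNum (circulant n k) = n / (k + 1) :=
  stmt11_general n k hkn

end OITRPaper
end

section
/- For any complete bipartite graph K_{r,s} with 3 ≤ r ≤ s, the outer-independent total Roman domination number equals r + 2, i.e., γ_oitR(K_{r,s}) = r + 2. -/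
namespace OITRPaper

variable {V : Type*}

variable [Fintype V]

lemma sum_ite_two (n : ℕ) (i₀ : Fin n) :
    (∑ i : Fin n, (if i = i₀ then 2 else 1)) = n + 1 := by
  have : ∀ i : Fin n, (if i = i₀ then 2 else 1) = (if i = i₀ then 1 else 0) + 1 := by
    intro i; split <;> rfl
  simp only [this, Finset.sum_add_distrib, Finset.sum_ite_eq', Finset.mem_univ, if_true,
    Finset.sum_const, Finset.card_univ, Fintype.card_fin, smul_eq_mul, mul_one]
  omega

/-- `γ_oitR(K_{r,s}) = r + 2` for `3 ≤ r ≤ s`. -/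
theorem stmt15 (r s : ℕ) (hr : 3 ≤ r) (hrs : r ≤ s) :
    oitRomanDomNum (completeBipartiteGraph (Fin r) (Fin s)) = r + 2 := by
  set G := completeBipartiteGraph (Fin r) (Fin s) with hG
  have hadj : ∀ (i : Fin r) (j : Fin s), G.Adj (Sum.inl i) (Sum.inr j) := by
    intro i j; simp [hG]
  have hadj' : ∀ (i : Fin r) (j : Fin s), G.Adj (Sum.inr j) (Sum.inl i) := by
    intro i j; simp [hG]
  have hnadjL : ∀ (i i' : Fin r), ¬ G.Adj (Sum.inl i) (Sum.inl i') := by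
    intro i i'; simp [hG]
  have hnadjR : ∀ (j j' : Fin s), ¬ G.Adj (Sum.inr j) (Sum.inr j') := by
    intro j j'; simp [hG]
  have hr0 : (0 : ℕ) < r := by omega
  have hs0 : (0 : ℕ) < s := by omega
  set i₀ : Fin r := ⟨0, hr0⟩
  set j₀ : Fin s := ⟨0, hs0⟩
  -- the witness function
  set f₀ : Fin r ⊕ Fin s → ℕ := fun v =>
    match v with
    | Sum.inl i => if i = i₀ then 2 else 1
    | Sum.inr j => if j = j₀ then 1 else 0 with hf₀
  have hf₀mem : IsOITRDF G f₀ ∧ ∑ v, f₀ v = r + 2 := by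
    constructor
    · refine ⟨⟨⟨?_, ?_⟩, ?_⟩, ?_⟩
      · rintro (i | j) <;> simp only [hf₀] <;> split <;> omega
      · rintro (i | j) h
        · simp only [hf₀] at h; split at h <;> omega
        · exact ⟨Sum.inl i₀, hadj' i₀ j, by simp [hf₀]⟩
      · rintro (i | j) hu (i' | j') hv hA
        · exact hnadjL i i' hA
        · simp only [Set.mem_setOf_eq, hf₀] at hu; split at hu <;> omega
        · simp only [Set.mem_setOf_eq, hf₀] at hv; split at hv <;> omega
        · exact hnadjR j j' hA
      · rintro (i | j) h
        · exact ⟨Sum.inr j₀, hadj i j₀, by simp [hf₀]⟩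
        · refine ⟨Sum.inl i₀, hadj' i₀ j, by simp [hf₀]⟩
    · rw [Fintype.sum_sum_type]
      have h1 : (∑ i : Fin r, f₀ (Sum.inl i)) = r + 1 := sum_ite_two r i₀
      have h2 : (∑ j : Fin s, f₀ (Sum.inr j)) = 1 := by
        simp [hf₀, Finset.sum_ite_eq']
      omega
  have hne : (r + 2) ∈ {w | ∃ f, IsOITRDF G f ∧ ∑ v, f v = w} :=
    ⟨f₀, hf₀mem.1, hf₀mem.2⟩
  have hub : oitRomanDomNum G ≤ r + 2 := Nat.sInf_le hne
  have hlb : r + 2 ≤ oitRomanDomNum G := by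
    refine le_csInf ⟨r + 2, hne⟩ ?_
    rintro w ⟨f, ⟨⟨⟨hle2, hrdf⟩, hind⟩, htot⟩, rfl⟩
    rw [Fintype.sum_sum_type]
    -- no zero on both sides
    have hkey : (∀ i : Fin r, 1 ≤ f (Sum.inl i)) ∨ (∀ j : Fin s, 1 ≤ f (Sum.inr j)) := by
      by_contra h
      push_neg at h
      obtain ⟨⟨i, hi⟩, ⟨j, hj⟩⟩ := h
      have hi0 : f (Sum.inl i) = 0 := by omega
      have hj0 : f (Sum.inr j) = 0 := by omega
      exact hind hi0 hj0 (hadj i j)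
    rcases hkey with hL | hR
    · -- all left positive
      have hsumL : (r : ℕ) ≤ ∑ i : Fin r, f (Sum.inl i) := by
        calc (r : ℕ) = ∑ _i : Fin r, 1 := by simp
        _ ≤ _ := Finset.sum_le_sum (fun i _ => hL i)
      by_cases hRz : ∃ j : Fin s, f (Sum.inr j) = 0
      · obtain ⟨j, hj⟩ := hRz
        obtain ⟨u, huadj, hu2⟩ := hrdf _ hj
        obtain ⟨i₂, rfl⟩ : ∃ i₂, u = Sum.inl i₂ := by
          cases u with
          | inl i₂ => exact ⟨i₂, rfl⟩
          | inr j₂ => exact absurd huadj (hnadjR j j₂)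
        -- left sum ≥ r+1
        have hsumL' : (r : ℕ) + 1 ≤ ∑ i : Fin r, f (Sum.inl i) := by
          have := sum_ite_two r i₂
          calc (r : ℕ) + 1 = ∑ i : Fin r, (if i = i₂ then 2 else 1) := this.symm
          _ ≤ _ := by
              refine Finset.sum_le_sum (fun i _ => ?_)
              split
              · next h => subst h; omega
              · exact hL i
        -- left positive vertex needs positive right neighbor
        obtain ⟨u, huadj2, hu1⟩ := htot (Sum.inl i₂) (by omega)
        obtain ⟨j₂, rfl⟩ : ∃ j₂, u = Sum.inr j₂ := by
          cases u with
          | inl i₃ => exact absurd huadj2 (hnadjL i₂ i₃)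
          | inr j₂ => exact ⟨j₂, rfl⟩
        have hsumR : 1 ≤ ∑ j : Fin s, f (Sum.inr j) :=
          le_trans hu1 (Finset.single_le_sum (f := fun j => f (Sum.inr j)) (fun j _ => Nat.zero_le _) (Finset.mem_univ j₂))
        omega
      · push_neg at hRz
        have hsumR : (s : ℕ) ≤ ∑ j : Fin s, f (Sum.inr j) := by
          calc (s : ℕ) = ∑ _j : Fin s, 1 := by simp
          _ ≤ _ := Finset.sum_le_sum (fun j _ => Nat.one_le_iff_ne_zero.mpr (hRz j))
        omega
    · -- all right positive
      have hsumR : (s : ℕ) ≤ ∑ j : Fin s, f (Sum.inr j) := by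
        calc (s : ℕ) = ∑ _j : Fin s, 1 := by simp
        _ ≤ _ := Finset.sum_le_sum (fun j _ => hR j)
      by_cases hLz : ∃ i : Fin r, f (Sum.inl i) = 0
      · obtain ⟨i, hi⟩ := hLz
        obtain ⟨u, huadj, hu2⟩ := hrdf _ hi
        obtain ⟨j₂, rfl⟩ : ∃ j₂, u = Sum.inr j₂ := by
          cases u with
          | inl i₂ => exact absurd huadj (hnadjL i i₂)
          | inr j₂ => exact ⟨j₂, rfl⟩
        have hsumR' : (s : ℕ) + 1 ≤ ∑ j : Fin s, f (Sum.inr j) := by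
          have := sum_ite_two s j₂
          calc (s : ℕ) + 1 = ∑ j : Fin s, (if j = j₂ then 2 else 1) := this.symm
          _ ≤ _ := by
              refine Finset.sum_le_sum (fun j _ => ?_)
              split
              · next h => subst h; omega
              · exact hR j
        obtain ⟨u, huadj2, hu1⟩ := htot (Sum.inr j₂) (by omega)
        obtain ⟨i₂, rfl⟩ : ∃ i₂, u = Sum.inl i₂ := by
          cases u with
          | inl i₂ => exact ⟨i₂, rfl⟩
          | inr j₃ => exact absurd huadj2 (hnadjR j₂ j₃)
        have hsumL : 1 ≤ ∑ i : Fin r, f (Sum.inl i) :=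
          le_trans hu1 (Finset.single_le_sum (f := fun i => f (Sum.inl i)) (fun i _ => Nat.zero_le _) (Finset.mem_univ i₂))
        omega
      · push_neg at hLz
        have hsumL : (r : ℕ) ≤ ∑ i : Fin r, f (Sum.inl i) := by
          calc (r : ℕ) = ∑ _i : Fin r, 1 := by simp
          _ ≤ _ := Finset.sum_le_sum (fun i _ => Nat.one_le_iff_ne_zero.mpr (hLz i))
        -- need one more: total condition forces a right... already hsumR ≥ s ≥ r, so total ≥ r + s ≥ r + 3
        omega
  omega

end OITRPaper
end
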